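/- arXiv:1302.3840 — 3 statements merged into one kernel-verified Lean document; each statement's English description precedes it below -/
import Mathlib

section
/- Let Q be a subgraph of the n-dimensional hypercube Q_n with q vertices, and let t ≥ 2·C(n, ⌊n/2⌋). Then Q is a subgraph of the t-th power of the path P_q. Equivalently, there is an ordering x_1, ..., x_q of the vertices of Q such that every edge x_i x_j of Q satisfies |i - j| ≤ t. -/
def cubeGraph (n : ℕ) : SimpleGraph (Fin n → Bool) where
  Adj x y := (Finset.univ.filter fun i => x i ≠ y i).card = 1
  symm := by
    constructor
    intro x y hxy
    have h : (Finset.univ.filter fun i => y i ≠ x i)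
        = Finset.univ.filter fun i => x i ≠ y i := by
      apply Finset.filter_congr
      intro i _
      simp [ne_comm]
    rw [h]; exact hxy
  loopless := by
    constructor
    intro x hx
    simp at hx

/-!
Order the vertices level by level (by number of `true` coordinates), arbitrarily within a
level. A cube edge joins two consecutive levels, so every vertex between its endpoints in
this order lies in one of those two levels of `Q`, each of which has at most
`C(n, k) ≤ C(n, ⌊n/2⌋)` vertices; hence the endpoints are fewer than `2·C(n, ⌊n/2⌋)`
positions apart.
-/

open Finset

section LevelOrder

variable {α : Type*} [LinearOrder α] [Fintype α]

lemma OrderIso.val_add_one_sub_le_card_filter {N : ℕ} (e : α ≃o Fin N) (x y : α) :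
    (e y : ℕ) + 1 - e x ≤ #{z | x ≤ z ∧ z ≤ y} := by
  calc (e y : ℕ) + 1 - e x = #(Icc (e x) (e y)) := (Fin.card_Icc _ _).symm
    _ = #((Icc (e x) (e y)).map e.symm.toEquiv.toEmbedding) := (card_map _).symm
    _ ≤ #{z | x ≤ z ∧ z ≤ y} := card_le_card fun z hz => by
      obtain ⟨i, hi, rfl⟩ := mem_map.mp hz
      rw [mem_Icc] at hi
      simpa [← e.le_symm_apply, ← e.symm_apply_le] using hi

lemma OrderIso.abs_sub_lt_of_card_level_le {N m : ℕ} (e : α ≃o Fin N) {w : α → ℕ}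
    (hw : Monotone w) (hlevel : ∀ k, #{z | w z = k} ≤ m) {x y : α}
    (hxy : w y ≤ w x + 1) (hyx : w x ≤ w y + 1) : |(e x : ℤ) - e y| < 2 * m := by
  wlog h : x ≤ y generalizing x y
  · rw [abs_sub_comm]
    exact this hyx hxy (le_of_not_ge h)
  have hsub : ({z | x ≤ z ∧ z ≤ y} : Finset α) ⊆
      ({z | w z = w x} : Finset α) ∪ ({z | w z = w x + 1} : Finset α) := by
    intro z hz
    simp only [mem_filter, mem_univ, true_and, mem_union] at hz ⊢
    have hxz := hw hz.1
    have hzy := hw hz.2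
    omega
  have hgap := (e.val_add_one_sub_le_card_filter x y).trans
    ((card_le_card hsub).trans (card_union_le _ _))
  have hlow := hlevel (w x)
  have hhigh := hlevel (w x + 1)
  have hexy : e x ≤ e y := e.monotone h
  rw [abs_lt]
  constructor <;> omega

end LevelOrder

theorem Finset.exists_equiv_fin_abs_sub_lt_of_card_level_le {V : Type*} (s : Finset V)
    (w : V → ℕ) {m : ℕ} (hlevel : ∀ k, #{x ∈ s | w x = k} ≤ m) :
    ∃ e : s ≃ Fin #s, ∀ x y : s, w y ≤ w x + 1 → w x ≤ w y + 1 →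
      |(e x : ℤ) - e y| < 2 * m := by
  classical
  let key : s → ℕ ×ₗ Fin #s := fun x => toLex (w x, s.equivFin x)
  have hkey : Function.Injective key := fun x y h =>
    s.equivFin.injective (congrArg (fun p => (ofLex p).2) h)
  let _ : LinearOrder s := LinearOrder.lift' key hkey
  let e := (Fintype.orderIsoFinOfCardEq s (Fintype.card_coe s)).symm
  refine ⟨e.toEquiv, fun x y => e.abs_sub_lt_of_card_level_le (w := fun z => w z) ?_ ?_⟩
  · exact fun x y (hxy : key x ≤ key y) => Prod.Lex.monotone_fst _ _ hxy
  · intro k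
    refine le_trans ?_ (hlevel k)
    exact card_le_card_of_injOn Subtype.val (fun z hz => by simpa using hz)
      Subtype.val_injective.injOn

namespace cubeGraph

variable {n : ℕ}

def weight (x : Fin n → Bool) : ℕ := #{i | x i}

lemma weight_le_add_one_of_adj {x y : Fin n → Bool} (h : (cubeGraph n).Adj x y) :
    weight y ≤ weight x + 1 := by
  obtain ⟨i, hi⟩ := card_eq_one.mp h
  have hsub : ({j | y j} : Finset (Fin n)) ⊆ insert i ({j | x j} : Finset (Fin n)) := by
    intro j hj
    by_cases hji : j = i
    · simp [hji]
    · have : x j = y j := by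
        by_contra hne
        exact hji (mem_singleton.mp (hi ▸ mem_filter.mpr ⟨mem_univ j, hne⟩))
      simp_all
  exact (card_le_card hsub).trans (card_insert_le _ _)

lemma card_filter_weight_eq_le (s : Finset (Fin n → Bool)) (k : ℕ) :
    #{x ∈ s | weight x = k} ≤ n.choose k := by
  have hinj : Set.InjOn (fun x : Fin n → Bool => ({i | x i} : Finset (Fin n))) ↑s := by
    intro x _ y _ h
    funext i
    simpa using congrArg (i ∈ ·) h
  calc #{x ∈ s | weight x = k}
      ≤ #(powersetCard k (univ : Finset (Fin n))) :=
        card_le_card_of_injOn _ (fun x hx => by simpa [weight] using (mem_filter.mp hx).2)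
          (hinj.mono (filter_subset _ _))
    _ = n.choose k := by rw [card_powersetCard, card_fin]

end cubeGraph

theorem stmt1_general (n q t : ℕ) (ht : 2 * Nat.choose n (n / 2) ≤ t)
    (s : Finset (Fin n → Bool)) (hq : s.card = q)
    (Q : SimpleGraph (Fin n → Bool)) (hQ : Q ≤ cubeGraph n) :
    ∃ e : {x // x ∈ s} ≃ Fin q,
      ∀ (x y : {x // x ∈ s}), Q.Adj x y → |(e x : ℤ) - (e y : ℤ)| ≤ (t : ℤ) := by
  obtain ⟨e, he⟩ := s.exists_equiv_fin_abs_sub_lt_of_card_level_le cubeGraph.weight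
    fun k => (cubeGraph.card_filter_weight_eq_le s k).trans (Nat.choose_le_middle k n)
  refine ⟨e.trans (finCongr hq), fun x y hxy => ?_⟩
  have hclose := he x y (cubeGraph.weight_le_add_one_of_adj (hQ hxy))
    (cubeGraph.weight_le_add_one_of_adj (hQ hxy.symm))
  simp only [Equiv.trans_apply, finCongr_apply, Fin.val_cast]
  omega

/-- Any subgraph `Q` of the hypercube `Q_n` with vertex set `s` of
size `q` embeds in the `t`-th power of the path `P_q`, whenever
`t ≥ 2·C(n, ⌊n/2⌋)`: there is an ordering of the vertices such that every edge
joins vertices at distance at most `t` in the order. -/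
theorem stmt1 (n q t : ℕ) (ht : 2 * Nat.choose n (n / 2) ≤ t)
    (s : Finset (Fin n → Bool)) (hq : s.card = q)
    (Q : SimpleGraph (Fin n → Bool)) (hQ : Q ≤ cubeGraph n)
    (hQs : ∀ x y, Q.Adj x y → x ∈ s ∧ y ∈ s) :
    ∃ e : {x // x ∈ s} ≃ Fin q,
      ∀ (x y : {x // x ∈ s}), Q.Adj x y → |(e x : ℤ) - (e y : ℤ)| ≤ (t : ℤ) :=
  stmt1_general n q t ht s hq Q hQ
end

section
/- Let s be a positive integer with s ≥ 2·C(n, ⌊n/2⌋), and let G be a graph whose vertex set is a disjoint union A ∪ B with |A| = |B| = 2^{n-1}, such that G[A] and G[B] are complete, and there exist X ⊆ A and Y ⊆ B with |X| = |Y| = s such that all edges between X and Y are present in G. Then G contains the n-dimensional hypercube Q_n as a subgraph. -/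
/-!
Cut `Q_n` into two halves of `2^(n-1)` vertices by Hamming weight: the vertices of weight below
`n/2`, plus half of the middle level, against the rest. A cube edge changes the weight by one,
so the vertices of either half that have a neighbour in the other half lie in two consecutive
levels and number at most `2·C(n, ⌊n/2⌋) ≤ s`. Map each half injectively into its clique, sending
these boundary vertices into `X`, respectively `Y`: edges inside a half land in a clique, edges
across the cut in `X × Y`.
-/

open Finset

theorem Finset.exists_injOn_mapsTo_of_subset {α β : Type*} [Nonempty β]
    {s s' : Finset α} {t t' : Finset β} (hs : s' ⊆ s) (ht : t' ⊆ t)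
    (h' : #s' ≤ #t') (h : #s ≤ #t) :
    ∃ f : α → β, Set.MapsTo f s t ∧ Set.MapsTo f s' t' ∧ Set.InjOn f s := by
  classical
  obtain ⟨g, hg, hginj⟩ := (s' : Set α).toFinite.exists_injOn_of_encard_le
    (t := (t' : Set β)) (by simpa using h')
  have himage : s'.image g ⊆ t := (image_subset_iff.2 hg).trans ht
  obtain ⟨g', hg', hg'inj⟩ := ((s \ s' : Finset α) : Set α).toFinite.exists_injOn_of_encard_le
    (t := ((t \ s'.image g : Finset β) : Set β)) (by
      rw [Set.encard_coe_eq_coe_finsetCard, Set.encard_coe_eq_coe_finsetCard, Nat.cast_le,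
        card_sdiff_of_subset hs, card_sdiff_of_subset himage, card_image_of_injOn hginj]
      omega)
  refine ⟨(s' : Set α).piecewise g g', fun x hx => ?_, fun x hx => ?_,
    fun x hx y hy hxy => ?_⟩
  · by_cases hx' : x ∈ s'
    · simpa [hx'] using ht (hg hx')
    · simpa [hx'] using (mem_sdiff.1 (hg' (mem_sdiff.2 ⟨hx, hx'⟩))).1
  · simpa [show x ∈ s' from hx] using hg hx
  · have hcross : ∀ a ∈ s', ∀ b ∈ s, b ∉ s' → g a ≠ g' b := fun a ha b hb hb' hab =>
      (mem_sdiff.1 (hg' (mem_sdiff.2 ⟨hb, hb'⟩))).2 (hab ▸ mem_image_of_mem g ha)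
    by_cases hx' : x ∈ s' <;> by_cases hy' : y ∈ s' <;>
      simp only [Set.piecewise, mem_coe, hx', hy', if_true, if_false] at hxy
    · exact hginj hx' hy' hxy
    · exact (hcross x hx' y hy hy' hxy).elim
    · exact (hcross y hy' x hx hx' hxy.symm).elim
    · exact hg'inj (by simp [hx, hx']) (by simp [hy, hy']) hxy

namespace SimpleGraph

variable {W V : Type*}

open Classical in
noncomputable def innerBoundary (H : SimpleGraph W) (S : Finset W) : Finset W :=
  {x ∈ S | ∃ y ∉ S, H.Adj x y}

theorem mem_innerBoundary {H : SimpleGraph W} {S : Finset W} {x : W} :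
    x ∈ H.innerBoundary S ↔ x ∈ S ∧ ∃ y ∉ S, H.Adj x y := by
  simp [innerBoundary]

theorem innerBoundary_subset (H : SimpleGraph W) (S : Finset W) : H.innerBoundary S ⊆ S :=
  fun _ hx => (mem_innerBoundary.1 hx).1

theorem exists_injective_hom_of_cut [Fintype W] [DecidableEq W] [Nonempty V]
    (H : SimpleGraph W) (G : SimpleGraph V) (L : Finset W) {A B X Y : Finset V}
    (hAB : Disjoint A B) (hA : G.IsClique (A : Set V)) (hB : G.IsClique (B : Set V))
    (hXA : X ⊆ A) (hYB : Y ⊆ B) (hXY : ∀ x ∈ X, ∀ y ∈ Y, G.Adj x y)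
    (hLA : #L ≤ #A) (hLB : #Lᶜ ≤ #B)
    (hLX : #(H.innerBoundary L) ≤ #X) (hLY : #(H.innerBoundary Lᶜ) ≤ #Y) :
    ∃ f : W → V, Function.Injective f ∧ ∀ x y, H.Adj x y → G.Adj (f x) (f y) := by
  classical
  obtain ⟨fA, hfA, hfAX, hfAinj⟩ :=
    L.exists_injOn_mapsTo_of_subset (H.innerBoundary_subset L) hXA hLX hLA
  obtain ⟨fB, hfB, hfBY, hfBinj⟩ :=
    Lᶜ.exists_injOn_mapsTo_of_subset (H.innerBoundary_subset Lᶜ) hYB hLY hLB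
  have hcross : ∀ x ∈ L, ∀ y ∉ L, H.Adj x y → G.Adj (fA x) (fB y) := fun x hx y hy hxy =>
    hXY _ (hfAX (mem_innerBoundary.2 ⟨hx, y, hy, hxy⟩)) _
      (hfBY (mem_innerBoundary.2 ⟨mem_compl.2 hy, x, by simpa using hx, hxy.symm⟩))
  refine ⟨(L : Set W).piecewise fA fB,
    (Set.injective_piecewise_iff _).2 ⟨hfAinj, by simpa using hfBinj, ?_⟩, fun x y hxy => ?_⟩
  · intro x hx y hy hxy
    exact Finset.disjoint_left.1 hAB (hfA hx) (mem_coe.1 (hxy ▸ hfB (by simpa using hy)))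
  by_cases hx : x ∈ L <;> by_cases hy : y ∈ L <;>
    simp only [Set.piecewise, mem_coe, hx, hy, if_true, if_false]
  · exact hA (hfA hx) (hfA hy) (hfAinj.ne hx hy (H.ne_of_adj hxy))
  · exact hcross x hx y hy hxy
  · exact (hcross y hy x hx hxy.symm).symm
  · exact hB (hfB (by simpa using hx)) (hfB (by simpa using hy))
      (hfBinj.ne (by simpa using hx) (by simpa using hy) (H.ne_of_adj hxy))

end SimpleGraph

namespace Hypercube

def weight {n : ℕ} (x : Fin n → Bool) : ℕ := #{i | x i = true}

theorem card_weight_eq_le (n k : ℕ) : #{x : Fin n → Bool | weight x = k} ≤ n.choose k := by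
  calc _ ≤ #(powersetCard k (univ : Finset (Fin n))) := by
        refine card_le_card_of_injOn (fun x => ({i | x i = true} : Finset (Fin n)))
          (fun x hx => ?_) ?_
        · simpa [mem_powersetCard, weight] using (mem_filter.1 (mem_coe.1 hx)).2
        · intro x _ y _ hxy
          funext i
          simpa using congrArg (i ∈ ·) hxy
    _ = n.choose k := by simp

theorem card_weight_mem_Icc_le (n a : ℕ) :
    #{x : Fin n → Bool | a ≤ weight x ∧ weight x ≤ a + 1} ≤ 2 * n.choose (n / 2) := by
  calc _ ≤ #(univ.filter (weight · = a) ∪ univ.filter (weight · = a + 1)) :=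
        card_le_card fun x hx => by
          simp only [mem_filter, mem_union, mem_univ, true_and] at hx ⊢
          omega
    _ ≤ n.choose a + n.choose (a + 1) :=
        (card_union_le _ _).trans (add_le_add (card_weight_eq_le n a) (card_weight_eq_le n _))
    _ ≤ 2 * n.choose (n / 2) := by
        have := Nat.choose_le_middle a n
        have := Nat.choose_le_middle (a + 1) n
        omega

theorem weight_le_weight_add_one_of_adj {n : ℕ} {x y : Fin n → Bool}
    (h : (cubeGraph n).Adj x y) : weight x ≤ weight y + 1 := by
  have h : #{i | x i ≠ y i} = 1 := h
  calc weight x ≤ #(univ.filter (y · = true) ∪ univ.filter (fun i => x i ≠ y i)) :=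
        card_le_card fun i => by cases x i <;> cases y i <;> simp_all
    _ ≤ weight y + 1 := h ▸ card_union_le _ _

theorem weight_compl {n : ℕ} (x : Fin n → Bool) : weight xᶜ = n - weight x := by
  calc weight xᶜ = #({i | x i = true} : Finset (Fin n))ᶜ := by
        rw [weight]; congr 1; ext i; simp
    _ = n - weight x := by rw [card_compl, Fintype.card_fin, weight]

/-- Complementation sends the key `k x = 2 * weight x + (x 0).toNat` to `2 * (n + 1) + 1 - k x`,
so it swaps `lowerHalf n` with its complement; the bit `x 0` breaks ties on the middle level. -/
def lowerHalf (n : ℕ) : Finset (Fin (n + 1) → Bool) :=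
  {x | 2 * weight x + (x 0).toNat ≤ n + 1}

theorem compl_mem_lowerHalf_iff {n : ℕ} (x : Fin (n + 1) → Bool) :
    xᶜ ∈ lowerHalf n ↔ x ∉ lowerHalf n := by
  have : weight x ≤ n + 1 := (card_filter_le _ _).trans_eq (card_fin _)
  cases h : x 0 <;> simp [lowerHalf, h, weight_compl] <;> omega

theorem card_compl_lowerHalf (n : ℕ) : #(lowerHalf n)ᶜ = #(lowerHalf n) :=
  card_nbij' compl compl (fun x hx => (compl_mem_lowerHalf_iff x).2 (by simpa using hx))
    (fun x hx => by simpa [compl_mem_lowerHalf_iff] using hx)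
    (fun x _ => compl_compl x) (fun x _ => compl_compl x)

theorem card_lowerHalf (n : ℕ) : #(lowerHalf n) = 2 ^ n := by
  have := card_add_card_compl (lowerHalf n)
  rw [card_compl_lowerHalf] at this
  simp only [Fintype.card_pi, Fintype.card_bool, prod_const, card_univ, Fintype.card_fin,
    pow_succ] at this
  omega

theorem weight_bounds_of_adj {n : ℕ} {x y : Fin (n + 1) → Bool} (hx : x ∈ lowerHalf n)
    (hy : y ∉ lowerHalf n) (h : (cubeGraph (n + 1)).Adj x y) :
    n ≤ 2 * weight x + 1 ∧ 2 * weight x ≤ n + 1 ∧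
      n + 1 ≤ 2 * weight y ∧ 2 * weight y ≤ n + 3 := by
  have := weight_le_weight_add_one_of_adj h
  have := weight_le_weight_add_one_of_adj h.symm
  have := Bool.toNat_le (x 0)
  have := Bool.toNat_le (y 0)
  simp only [lowerHalf, mem_filter, mem_univ, true_and, not_le] at hx hy
  omega

theorem card_innerBoundary_lowerHalf_le (n : ℕ) :
    #((cubeGraph (n + 1)).innerBoundary (lowerHalf n)) ≤ 2 * (n + 1).choose ((n + 1) / 2) := by
  refine (card_le_card fun x hx => ?_).trans (card_weight_mem_Icc_le (n + 1) (n / 2))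
  obtain ⟨hx, y, hy, hxy⟩ := SimpleGraph.mem_innerBoundary.1 hx
  have := weight_bounds_of_adj hx hy hxy
  simp only [mem_filter, mem_univ, true_and]
  omega

theorem card_innerBoundary_compl_lowerHalf_le (n : ℕ) :
    #((cubeGraph (n + 1)).innerBoundary (lowerHalf n)ᶜ) ≤ 2 * (n + 1).choose ((n + 1) / 2) := by
  refine (card_le_card fun y hy => ?_).trans (card_weight_mem_Icc_le (n + 1) ((n + 1) / 2))
  obtain ⟨hy, x, hx, hxy⟩ := SimpleGraph.mem_innerBoundary.1 hy
  have := weight_bounds_of_adj (by simpa using hx) (by simpa using hy) hxy.symm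
  simp only [mem_filter, mem_univ, true_and]
  omega

theorem exists_balanced_cut (n : ℕ) :
    ∃ L : Finset (Fin n → Bool), #L ≤ 2 ^ (n - 1) ∧ #Lᶜ ≤ 2 ^ (n - 1) ∧
      #((cubeGraph n).innerBoundary L) ≤ 2 * n.choose (n / 2) ∧
      #((cubeGraph n).innerBoundary Lᶜ) ≤ 2 * n.choose (n / 2) := by
  cases n with
  | zero => refine ⟨∅, ?_, ?_, ?_, ?_⟩ <;> exact (card_le_univ _).trans (by simp)
  | succ n =>
    exact ⟨lowerHalf n, (card_lowerHalf n).le,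
      ((card_compl_lowerHalf n).trans (card_lowerHalf n)).le,
      card_innerBoundary_lowerHalf_le n, card_innerBoundary_compl_lowerHalf_le n⟩

end Hypercube

theorem stmt3_general {V : Type*} (n s : ℕ)
    (hs : 2 * Nat.choose n (n / 2) ≤ s)
    (G : SimpleGraph V) (A B : Finset V)
    (hdisj : Disjoint A B)
    (hA : A.card = 2 ^ (n - 1)) (hB : B.card = 2 ^ (n - 1))
    (hAclique : G.IsClique (A : Set V)) (hBclique : G.IsClique (B : Set V))
    (X Y : Finset V) (hXA : X ⊆ A) (hYB : Y ⊆ B)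
    (hX : X.card = s) (hY : Y.card = s)
    (hXY : ∀ x ∈ X, ∀ y ∈ Y, G.Adj x y) :
    ∃ f : (Fin n → Bool) → V, Function.Injective f ∧
      ∀ x y, (cubeGraph n).Adj x y → G.Adj (f x) (f y) := by
  have : Nonempty V := ⟨(card_pos.1 (hA ▸ Nat.two_pow_pos _ : 0 < #A)).choose⟩
  obtain ⟨L, hLA, hLB, hLX, hLY⟩ := Hypercube.exists_balanced_cut n
  exact (cubeGraph n).exists_injective_hom_of_cut G L hdisj hAclique hBclique hXA hYB hXY
    (hA ▸ hLA) (hB ▸ hLB) (hX ▸ hLX.trans hs) (hY ▸ hLY.trans hs)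

/-- If `G` consists of two disjoint cliques `A`, `B` of size
`2^{n-1}` joined by a complete bipartite graph `K_{s,s}` with
`s ≥ 2·C(n,⌊n/2⌋)`, then `G` contains the hypercube `Q_n`. -/
theorem stmt3 {V : Type*} [Fintype V] [DecidableEq V] (n s : ℕ)
    (hs : 2 * Nat.choose n (n / 2) ≤ s)
    (G : SimpleGraph V) (A B : Finset V)
    (hdisj : Disjoint A B) (hunion : A ∪ B = Finset.univ)
    (hA : A.card = 2 ^ (n - 1)) (hB : B.card = 2 ^ (n - 1))
    (hAclique : G.IsClique (A : Set V)) (hBclique : G.IsClique (B : Set V))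
    (X Y : Finset V) (hXA : X ⊆ A) (hYB : Y ⊆ B)
    (hX : X.card = s) (hY : Y.card = s)
    (hXY : ∀ x ∈ X, ∀ y ∈ Y, G.Adj x y) :
    ∃ f : (Fin n → Bool) → V, Function.Injective f ∧
      ∀ x y, (cubeGraph n).Adj x y → G.Adj (f x) (f y) :=
  stmt3_general n s hs G A B hdisj hA hB hAclique hBclique X Y hXA hYB hX hY hXY
end

section
/- Let A be a finite set of vertices in a two-coloured complete graph, and let S_1, ..., S_m be disjoint vertex sets such that every vertex of each S_i has at most 2^{n-a} blue neighbours in A and |S_i| ≤ 2^{n-d_i+1}. For an index set I ⊆ [m] with |I| ≤ b, define A(i) = { v ∈ A : |N_B(v) ∩ S_i| ≥ (γ/d_i)·2^{n-d_i} } for each i ∈ I, where 1 ≤ d_i ≤ b for all i. Then |∪_{i∈I} A(i)| ≤ (b²/γ)·2^{n-a+1}. -/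
/-!
Double counting the blue edges between `A(i)` and `S_i`: each vertex of `A(i)` sends at least
`(γ/d_i)·2^(n-d_i)` of them into `S_i`, while each vertex of `S_i` receives at most `2^(n-a)`,
so `|A(i)| ≤ (d_i/γ)·2^(n-a+1) ≤ (b/γ)·2^(n-a+1)`. A union of at most `b` such sets gives `b²/γ`.
-/

open Finset

namespace SimpleGraph

variable {V : Type*} (G : SimpleGraph V) [DecidableRel G.Adj]

theorem card_filter_many_neighbors_mul_le (A S : Finset V) {t D : ℝ}
    (hD : ∀ w ∈ S, (#{v ∈ A | G.Adj w v} : ℝ) ≤ D) :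
    (#{v ∈ A | t ≤ #{w ∈ S | G.Adj v w}} : ℝ) * t ≤ #S * D := by
  simpa only [nsmul_eq_mul] using card_nsmul_le_card_nsmul (R := ℝ) G.Adj
    (s := {v ∈ A | t ≤ #{w ∈ S | G.Adj v w}}) (t := S)
    (fun v hv => (mem_filter.mp hv).2)
    (fun w hw => le_trans (mod_cast card_le_card fun v hv => by
      simp only [bipartiteBelow, mem_filter] at hv ⊢
      exact ⟨hv.1.1, hv.2.symm⟩) (hD w hw))

theorem card_filter_many_neighbors_le (A S : Finset V) {γ : ℝ} (hγ : 0 < γ) {n a d : ℕ}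
    (hd : 0 < d) (hD : ∀ w ∈ S, (#{v ∈ A | G.Adj w v} : ℝ) ≤ 2 ^ (n - a))
    (hS : (#S : ℝ) ≤ 2 ^ (n - d + 1)) :
    (#{v ∈ A | γ / d * 2 ^ (n - d) ≤ #{w ∈ S | G.Adj v w}} : ℝ) ≤ d / γ * 2 ^ (n - a + 1) := by
  have hd_real : (0 : ℝ) < d := mod_cast hd
  have ht : 0 < γ / d * 2 ^ (n - d) := by positivity
  refine le_of_mul_le_mul_right ?_ ht
  calc _ ≤ (#S : ℝ) * 2 ^ (n - a) := G.card_filter_many_neighbors_mul_le A S hD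
    _ ≤ 2 ^ (n - d + 1) * 2 ^ (n - a) := by gcongr
    _ = d / γ * 2 ^ (n - a + 1) * (γ / d * 2 ^ (n - d)) := by
      field_simp
      ring

end SimpleGraph

theorem Finset.card_biUnion_le_of_card_le {ι β : Type*} [DecidableEq β] {I : Finset ι}
    {f : ι → Finset β} {k : ℕ} {c : ℝ} (hI : #I ≤ k) (hc : 0 ≤ c)
    (hf : ∀ i ∈ I, (#(f i) : ℝ) ≤ c) : (#(I.biUnion f) : ℝ) ≤ k * c :=
  calc (#(I.biUnion f) : ℝ) ≤ ∑ i ∈ I, (#(f i) : ℝ) := mod_cast card_biUnion_le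
    _ ≤ #I * c := by simpa only [nsmul_eq_mul] using sum_le_card_nsmul I _ c hf
    _ ≤ k * c := by gcongr

theorem stmt10_general {V : Type*} [DecidableEq V] (B : SimpleGraph V)
    [DecidableRel B.Adj] (γ : ℝ) (hγ : 0 < γ) (n a b m : ℕ)
    (A : Finset V) (S : Fin m → Finset V)
    (d : Fin m → ℕ) (hd1 : ∀ i, 1 ≤ d i) (hdb : ∀ i, d i ≤ b)
    (hdeg : ∀ i, ∀ v ∈ S i, ((A.filter fun w => B.Adj v w).card : ℝ) ≤ 2 ^ (n - a))
    (hScard : ∀ i, ((S i).card : ℝ) ≤ 2 ^ (n - d i + 1))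
    (I : Finset (Fin m)) (hI : I.card ≤ b) :
    (((I.biUnion fun i => A.filter fun v =>
        (γ / d i) * 2 ^ (n - d i) ≤ ((S i).filter fun w => B.Adj v w).card).card : ℝ))
      ≤ (b ^ 2 / γ) * 2 ^ (n - a + 1) := by
  have hA : ∀ i ∈ I, (#{v ∈ A | γ / d i * 2 ^ (n - d i) ≤ #{w ∈ S i | B.Adj v w}} : ℝ)
      ≤ b / γ * 2 ^ (n - a + 1) := fun i _ =>
    (B.card_filter_many_neighbors_le A (S i) hγ (hd1 i) (hdeg i) (hScard i)).trans
      (by gcongr; exact_mod_cast hdb i)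
  calc _ ≤ b * (b / γ * 2 ^ (n - a + 1)) := card_biUnion_le_of_card_le hI (by positivity) hA
    _ = b ^ 2 / γ * 2 ^ (n - a + 1) := by ring

/-- Double-counting bound on the union of the high-blue-degree
sets `A(i) = {v ∈ A : |N_B(v) ∩ S_i| ≥ (γ/d_i)·2^{n-d_i}}`. -/
theorem stmt10 {V : Type*} [Fintype V] [DecidableEq V] (B : SimpleGraph V)
    [DecidableRel B.Adj] (γ : ℝ) (hγ : 0 < γ) (n a b m : ℕ)
    (ha : 1 ≤ a) (hb : 1 ≤ b) (han : a ≤ n)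
    (A : Finset V) (S : Fin m → Finset V)
    (hSdisj : ∀ i j, i ≠ j → Disjoint (S i) (S j))
    (d : Fin m → ℕ) (hd1 : ∀ i, 1 ≤ d i) (hdb : ∀ i, d i ≤ b) (hdn : ∀ i, d i ≤ n)
    (hdeg : ∀ i, ∀ v ∈ S i, ((A.filter fun w => B.Adj v w).card : ℝ) ≤ 2 ^ (n - a))
    (hScard : ∀ i, ((S i).card : ℝ) ≤ 2 ^ (n - d i + 1))
    (I : Finset (Fin m)) (hI : I.card ≤ b) :
    (((I.biUnion fun i => A.filter fun v =>
        (γ / d i) * 2 ^ (n - d i) ≤ ((S i).filter fun w => B.Adj v w).card).card : ℝ))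
      ≤ (b ^ 2 / γ) * 2 ^ (n - a + 1) :=
  stmt10_general B γ hγ n a b m A S d hd1 hdb hdeg hScard I hI
end
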